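/- Let u > 0 be a solution of u'' + p u = 0 on (a,b) such that at least one of L₁ = ∫_a^{x₀} dt/u² and L₂ = ∫_{x₀}^b dt/u² is finite. Then there is a solution of the same equation, linearly independent of u, that has no zero in (a,b); i.e., the Sturm separation theorem fails. -/

import Mathlib

open MeasureTheory Set Filter Topology

/-!
Reduction of order: for every constant `c`, `w = u (c + F)` with `F x = ∫_{x₀}^x dt/u²` is again a
solution, and its Wronskian with `u` is `1`. Since `F` is strictly increasing, `F > -L₁` on `(a,b)`
when `L₁ < ∞` and `F < L₂` when `L₂ < ∞`; so `c = L₁` or `c = -L₂` keeps `c + F`, hence `w`, away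
from zero.
-/

def IsSolutionOn (p : ℝ → ℝ) (I : Set ℝ) (u : ℝ → ℝ) : Prop :=
  ∀ x ∈ I, HasDerivAt u (deriv u x) x ∧ HasDerivAt (deriv u) (-(p x * u x)) x

section ReductionOfOrder

variable {p u F : ℝ → ℝ} {I : Set ℝ} {u' x : ℝ}

theorem hasDerivAt_mul_const_add (c : ℝ) (hu : HasDerivAt u u' x)
    (hF : HasDerivAt F (1 / u x ^ 2) x) (hux : u x ≠ 0) :
    HasDerivAt (fun t => u t * (c + F t)) (u' * (c + F x) + (u x)⁻¹) x :=
  (hu.mul (hF.const_add c)).congr_deriv (by field_simp)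

theorem wronskian_mul_const_add (c : ℝ) (hu : HasDerivAt u u' x)
    (hF : HasDerivAt F (1 / u x ^ 2) x) (hux : u x ≠ 0) :
    u x * deriv (fun t => u t * (c + F t)) x - u' * (u x * (c + F x)) = 1 := by
  rw [(hasDerivAt_mul_const_add c hu hF hux).deriv]
  field_simp
  ring

theorem IsSolutionOn.mul_const_add (hu : IsSolutionOn p I u) (hI : IsOpen I)
    (hu0 : ∀ x ∈ I, u x ≠ 0) (hF : ∀ x ∈ I, HasDerivAt F (1 / u x ^ 2) x) (c : ℝ) :
    IsSolutionOn p I (fun t => u t * (c + F t)) := by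
  have hw : ∀ x ∈ I, HasDerivAt (fun t => u t * (c + F t))
      (deriv u x * (c + F x) + (u x)⁻¹) x := fun x hx =>
    hasDerivAt_mul_const_add c (hu x hx).1 (hF x hx) (hu0 x hx)
  intro x hx
  refine ⟨(hw x hx).deriv ▸ hw x hx, ?_⟩
  have hderiv : deriv (fun t => u t * (c + F t)) =ᶠ[𝓝 x]
      fun t => deriv u t * (c + F t) + (u t)⁻¹ :=
    eventually_of_mem (hI.mem_nhds hx) fun t ht => (hw t ht).deriv
  refine HasDerivAt.congr_of_eventuallyEq ?_ hderiv
  have hux := hu0 x hx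
  refine (((hu x hx).2.mul ((hF x hx).const_add c)).add ((hu x hx).1.inv hux)).congr_deriv ?_
  field_simp
  ring

end ReductionOfOrder

section Primitive

variable {I : Set ℝ} {g : ℝ → ℝ} {x₀ x : ℝ}

theorem IsOpen.exists_lt_mem (hI : IsOpen I) (hx : x ∈ I) : ∃ z ∈ I, z < x :=
  ((eventually_nhdsWithin_of_eventually_nhds (s := Iio x) (hI.mem_nhds hx)).and
    self_mem_nhdsWithin).exists

theorem IsOpen.exists_gt_mem (hI : IsOpen I) (hx : x ∈ I) : ∃ z ∈ I, x < z :=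
  ((eventually_nhdsWithin_of_eventually_nhds (s := Ioi x) (hI.mem_nhds hx)).and
    self_mem_nhdsWithin).exists

theorem intervalIntegral_le_toReal_setLIntegral {s : Set ℝ} {y : ℝ} (hxy : x ≤ y)
    (hg : ContinuousOn g (Ioo x y)) (hg0 : ∀ t ∈ Ioo x y, 0 ≤ g t) (hs : Ioo x y ⊆ s)
    (hfin : ∫⁻ t in s, ENNReal.ofReal (g t) ≠ ⊤) :
    ∫ t in x..y, g t ≤ (∫⁻ t in s, ENNReal.ofReal (g t)).toReal := by
  rw [intervalIntegral.integral_of_le hxy, integral_Ioc_eq_integral_Ioo,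
    integral_eq_lintegral_of_nonneg_ae ((ae_restrict_iff' measurableSet_Ioo).2 (ae_of_all _ hg0))
      (hg.aestronglyMeasurable measurableSet_Ioo)]
  exact ENNReal.toReal_mono hfin (lintegral_mono_set hs)

theorem ContinuousOn.hasDerivAt_intervalIntegral (hg : ContinuousOn g I) (hIo : IsOpen I)
    (hIc : I.OrdConnected) (hx₀ : x₀ ∈ I) (hx : x ∈ I) :
    HasDerivAt (fun y => ∫ t in x₀..y, g t) (g x) x :=
  intervalIntegral.integral_hasDerivAt_right ((hg.mono (hIc.uIcc_subset hx₀ hx)).intervalIntegrable)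
    (hg.stronglyMeasurableAtFilter hIo x hx) (hg.continuousAt (hIo.mem_nhds hx))

theorem neg_toReal_le_intervalIntegral_of_lintegral_Iio_ne_top (hIc : I.OrdConnected)
    (hg : ContinuousOn g I) (hg0 : ∀ t ∈ I, 0 ≤ g t) (hx₀ : x₀ ∈ I)
    (hfin : ∫⁻ t in I ∩ Iio x₀, ENNReal.ofReal (g t) ≠ ⊤) (hx : x ∈ I) :
    -(∫⁻ t in I ∩ Iio x₀, ENNReal.ofReal (g t)).toReal ≤ ∫ t in x₀..x, g t := by
  rcases le_total x x₀ with hxx₀ | hx₀x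
  · have hsub : Ioo x x₀ ⊆ I := Ioo_subset_Icc_self.trans (hIc.out hx hx₀)
    rw [intervalIntegral.integral_symm, neg_le_neg_iff]
    exact intervalIntegral_le_toReal_setLIntegral hxx₀ (hg.mono hsub)
      (fun t ht => hg0 t (hsub ht)) (fun t ht => ⟨hsub ht, ht.2⟩) hfin
  · have hnonneg : 0 ≤ ∫ t in x₀..x, g t :=
      intervalIntegral.integral_nonneg hx₀x fun t ht => hg0 t (hIc.out hx₀ hx ht)
    linarith [ENNReal.toReal_nonneg (a := ∫⁻ t in I ∩ Iio x₀, ENNReal.ofReal (g t))]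

theorem intervalIntegral_le_toReal_of_lintegral_Ioi_ne_top (hIc : I.OrdConnected)
    (hg : ContinuousOn g I) (hg0 : ∀ t ∈ I, 0 ≤ g t) (hx₀ : x₀ ∈ I)
    (hfin : ∫⁻ t in I ∩ Ioi x₀, ENNReal.ofReal (g t) ≠ ⊤) (hx : x ∈ I) :
    ∫ t in x₀..x, g t ≤ (∫⁻ t in I ∩ Ioi x₀, ENNReal.ofReal (g t)).toReal := by
  rcases le_total x₀ x with hx₀x | hxx₀
  · have hsub : Ioo x₀ x ⊆ I := Ioo_subset_Icc_self.trans (hIc.out hx₀ hx)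
    exact intervalIntegral_le_toReal_setLIntegral hx₀x (hg.mono hsub)
      (fun t ht => hg0 t (hsub ht)) (fun t ht => ⟨hsub ht, ht.1⟩) hfin
  · have hnonneg : 0 ≤ ∫ t in x..x₀, g t :=
      intervalIntegral.integral_nonneg hxx₀ fun t ht => hg0 t (hIc.out hx hx₀ ht)
    rw [intervalIntegral.integral_symm]
    linarith [ENNReal.toReal_nonneg (a := ∫⁻ t in I ∩ Ioi x₀, ENNReal.ofReal (g t))]

theorem exists_add_intervalIntegral_ne_zero (hIo : IsOpen I) (hIc : I.OrdConnected)
    (hg : ContinuousOn g I) (hg_pos : ∀ t ∈ I, 0 < g t) (hx₀ : x₀ ∈ I)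
    (hfin : (∫⁻ t in I ∩ Iio x₀, ENNReal.ofReal (g t)) ≠ ⊤ ∨
      (∫⁻ t in I ∩ Ioi x₀, ENNReal.ofReal (g t)) ≠ ⊤) :
    ∃ c : ℝ, ∀ x ∈ I, c + ∫ t in x₀..x, g t ≠ 0 := by
  have hF := fun x (hx : x ∈ I) => hg.hasDerivAt_intervalIntegral hIo hIc hx₀ hx
  have hmono : StrictMonoOn (fun x => ∫ t in x₀..x, g t) I :=
    strictMonoOn_of_deriv_pos hIc.convex (fun x hx => (hF x hx).continuousAt.continuousWithinAt)
      fun x hx => by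
        rw [hIo.interior_eq] at hx
        exact (hF x hx).deriv ▸ hg_pos x hx
  have hg_nonneg := fun t ht => (hg_pos t ht).le
  rcases hfin with hfin | hfin
  · refine ⟨(∫⁻ t in I ∩ Iio x₀, ENNReal.ofReal (g t)).toReal, fun x hx => ne_of_gt ?_⟩
    obtain ⟨z, hz, hzx⟩ := hIo.exists_lt_mem hx
    linarith [hmono hz hx hzx,
      neg_toReal_le_intervalIntegral_of_lintegral_Iio_ne_top hIc hg hg_nonneg hx₀ hfin hz]
  · refine ⟨-(∫⁻ t in I ∩ Ioi x₀, ENNReal.ofReal (g t)).toReal, fun x hx => ne_of_lt ?_⟩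
    obtain ⟨z, hz, hxz⟩ := hIo.exists_gt_mem hx
    linarith [hmono hx hz hxz,
      intervalIntegral_le_toReal_of_lintegral_Ioi_ne_top hIc hg hg_nonneg hx₀ hfin hz]

end Primitive

theorem separation_fails_general (a b : EReal)
    (p u : ℝ → ℝ) (x₀ : ℝ)
    (I : Set ℝ) (hI : I = {x : ℝ | a < (x : EReal) ∧ (x : EReal) < b})
    (hx₀ : x₀ ∈ I)
    (hu : ∀ x ∈ I, HasDerivAt u (deriv u x) x ∧ HasDerivAt (deriv u) (-(p x * u x)) x)
    (hupos : ∀ x ∈ I, 0 < u x)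
    (hfin : (∫⁻ x in I ∩ Iio x₀, ENNReal.ofReal (1 / (u x) ^ 2)) ≠ ⊤ ∨
      (∫⁻ x in I ∩ Ioi x₀, ENNReal.ofReal (1 / (u x) ^ 2)) ≠ ⊤) :
    ∃ w : ℝ → ℝ,
      (∀ x ∈ I, HasDerivAt w (deriv w x) x ∧ HasDerivAt (deriv w) (-(p x * w x)) x) ∧
      (∃ x ∈ I, u x * deriv w x - deriv u x * w x ≠ 0) ∧
      ∀ x ∈ I, w x ≠ 0 := by
  have hIo : IsOpen I := hI ▸ isOpen_Ioo.preimage continuous_coe_real_ereal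
  have hIc : I.OrdConnected := hI ▸ ordConnected_Ioo.preimage_mono EReal.coe_strictMono.monotone
  have hu0 : ∀ x ∈ I, u x ≠ 0 := fun x hx => (hupos x hx).ne'
  have hucont : ContinuousOn u I := fun x hx => (hu x hx).1.continuousAt.continuousWithinAt
  have hg : ContinuousOn (fun t => 1 / u t ^ 2) I :=
    continuousOn_const.div (hucont.pow 2) fun x hx => pow_ne_zero 2 (hu0 x hx)
  have hF := fun x (hx : x ∈ I) => hg.hasDerivAt_intervalIntegral hIo hIc hx₀ hx
  obtain ⟨c, hc⟩ := exists_add_intervalIntegral_ne_zero hIo hIc hg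
    (fun x hx => by have := hupos x hx; positivity) hx₀ hfin
  refine ⟨fun t => u t * (c + ∫ s in x₀..t, 1 / u s ^ 2),
    IsSolutionOn.mul_const_add hu hIo hu0 hF c, ⟨x₀, hx₀, ?_⟩,
    fun x hx => mul_ne_zero (hu0 x hx) (hc x hx)⟩
  rw [wronskian_mul_const_add c (hu x₀ hx₀).1 (hF x₀ hx₀) (hu0 x₀ hx₀)]
  exact one_ne_zero

/-- If one of the boundary integrals of `1/u²` is finite, then the Sturm separation theorem
fails: there is a solution, linearly independent of `u`, with no zero in `(a,b)`. -/
theorem separation_fails (a b : EReal) (hab : a < b)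
    (p u : ℝ → ℝ) (x₀ : ℝ)
    (I : Set ℝ) (hI : I = {x : ℝ | a < (x : EReal) ∧ (x : EReal) < b})
    (hx₀ : x₀ ∈ I)
    (hp : ContinuousOn p I)
    (hu : ∀ x ∈ I, HasDerivAt u (deriv u x) x ∧ HasDerivAt (deriv u) (-(p x * u x)) x)
    (hupos : ∀ x ∈ I, 0 < u x)
    (hfin : (∫⁻ x in I ∩ Iio x₀, ENNReal.ofReal (1 / (u x) ^ 2)) ≠ ⊤ ∨
      (∫⁻ x in I ∩ Ioi x₀, ENNReal.ofReal (1 / (u x) ^ 2)) ≠ ⊤) :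
    ∃ w : ℝ → ℝ,
      (∀ x ∈ I, HasDerivAt w (deriv w x) x ∧ HasDerivAt (deriv w) (-(p x * w x)) x) ∧
      (∃ x ∈ I, u x * deriv w x - deriv u x * w x ≠ 0) ∧
      ∀ x ∈ I, w x ≠ 0 :=
  separation_fails_general a b p u x₀ I hI hx₀ hu hupos hfin
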